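/- If G has a critical edge, then the problem min{x^T(I + A_G)x : x ∈ Δ_n} has infinitely many global minimizers. Explicitly, if I ∪ {1} and I ∪ {2} are both stable sets of size α(G) and {1,2} ∈ E, then for every t ∈ [0,1] the vector (t χ^{I∪{1}} + (1−t) χ^{I∪{2}})/α(G) is a global minimizer. -/
import Mathlib

open Matrix Finset
open scoped Classical

def IsStable {n : ℕ} (G : SimpleGraph (Fin n)) (S : Finset (Fin n)) : Prop :=
  ∀ i ∈ S, ∀ j ∈ S, ¬ G.Adj i j

noncomputable def alpha {n : ℕ} (G : SimpleGraph (Fin n)) : ℕ :=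
  sSup {k | ∃ S : Finset (Fin n), IsStable G S ∧ S.card = k}

noncomputable def indic {n : ℕ} (S : Finset (Fin n)) : Fin n → ℝ :=
  fun i => if i ∈ S then 1 else 0

noncomputable def qform {n : ℕ} (M : Matrix (Fin n) (Fin n) ℝ) (x : Fin n → ℝ) : ℝ :=
  x ⬝ᵥ M.mulVec x

noncomputable def fG {n : ℕ} (G : SimpleGraph (Fin n)) (x : Fin n → ℝ) : ℝ :=
  qform (1 + G.adjMatrix ℝ) x

noncomputable def globMin {n : ℕ} (f : (Fin n → ℝ) → ℝ) : Set (Fin n → ℝ) :=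
  {x | x ∈ stdSimplex ℝ (Fin n) ∧ ∀ y ∈ stdSimplex ℝ (Fin n), f x ≤ f y}

lemma qform_expand {n : ℕ} (M : Matrix (Fin n) (Fin n) ℝ) (x : Fin n → ℝ) :
    qform M x = ∑ w, ∑ z, x w * M w z * x z := by
  simp [qform, dotProduct, Matrix.mulVec, Finset.mul_sum, mul_assoc]

lemma card_le_alpha {n : ℕ} (G : SimpleGraph (Fin n)) (S : Finset (Fin n))
    (hS : IsStable G S) : S.card ≤ alpha G := by
  apply le_csSup
  · exact ⟨n, fun k hk => by
      obtain ⟨T, _, hT⟩ := hk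
      simpa [hT] using (Finset.card_le_univ T).trans_eq (by simp)⟩
  · exact ⟨S, hS, rfl⟩

lemma qform_add_smul {n : ℕ} (M : Matrix (Fin n) (Fin n) ℝ)
    (hM : ∀ w z, M w z = M z w) (x d : Fin n → ℝ) (s : ℝ) :
    qform M (x + s • d) =
      qform M x + 2 * s * (∑ w, ∑ z, d w * M w z * x z) + s ^ 2 * qform M d := by
  have key : ∀ w z : Fin n, (x + s • d) w * M w z * (x + s • d) z =
      x w * M w z * x z + s * (d w * M w z * x z) + s * (x w * M w z * d z)
        + s ^ 2 * (d w * M w z * d z) := by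
    intro w z; simp only [Pi.add_apply, Pi.smul_apply, smul_eq_mul]; ring
  have swap : (∑ w, ∑ z, x w * M w z * d z) = ∑ w, ∑ z, d w * M w z * x z := by
    rw [Finset.sum_comm]
    refine Finset.sum_congr rfl fun z _ => Finset.sum_congr rfl fun w _ => ?_
    rw [hM w z]; ring
  simp only [qform_expand, key, Finset.sum_add_distrib, ← Finset.mul_sum]
  rw [swap]; ring

lemma entry_sum {n : ℕ} (G : SimpleGraph (Fin n)) (w z : Fin n) :
    (1 + G.adjMatrix ℝ) w z + (Gᶜ).adjMatrix ℝ w z = 1 := by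
  by_cases h : w = z
  · subst h; simp [Matrix.one_apply]
  · simp [Matrix.one_apply_ne h, SimpleGraph.compl_adj, h]
    by_cases hA : G.Adj w z <;> simp [hA, h]

lemma decomp {n : ℕ} (G : SimpleGraph (Fin n)) (x : Fin n → ℝ) :
    fG G x + qform ((Gᶜ).adjMatrix ℝ) x = (∑ w, x w) ^ 2 := by
  rw [fG, qform_expand, qform_expand, ← Finset.sum_add_distrib]
  have : ∀ w : Fin n, (∑ z, x w * (1 + G.adjMatrix ℝ) w z * x z)
      + (∑ z, x w * (Gᶜ).adjMatrix ℝ w z * x z) = ∑ z, x w * x z := by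
    intro w
    rw [← Finset.sum_add_distrib]
    refine Finset.sum_congr rfl fun z _ => ?_
    have h := entry_sum G w z
    calc x w * (1 + G.adjMatrix ℝ) w z * x z + x w * (Gᶜ).adjMatrix ℝ w z * x z
        = x w * ((1 + G.adjMatrix ℝ) w z + (Gᶜ).adjMatrix ℝ w z) * x z := by ring
      _ = x w * x z := by rw [h]; ring
  simp only [this]
  rw [sq, Finset.sum_mul_sum]

lemma ms_bound {n : ℕ} (G : SimpleGraph (Fin n)) :
    ∀ k : ℕ, ∀ x : Fin n → ℝ, x ∈ stdSimplex ℝ (Fin n) →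
      (univ.filter fun w => x w ≠ 0).card ≤ k →
      qform ((Gᶜ).adjMatrix ℝ) x ≤ 1 - (alpha G : ℝ)⁻¹ := by
  intro k
  induction k with
  | zero =>
    intro x hx hcard
    exfalso
    have h0 : (univ.filter fun w => x w ≠ 0) = ∅ := Finset.card_eq_zero.mp (Nat.le_zero.mp hcard)
    have : ∀ w : Fin n, x w = 0 := by
      intro w
      by_contra hw
      have : w ∈ (univ.filter fun w => x w ≠ 0) := by simp [hw]
      simp [h0] at this
    have h2 := hx.2
    rw [Finset.sum_congr rfl fun w _ => this w] at h2
    simp at h2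
  | succ k ih =>
    intro x hx hcard
    obtain ⟨hx0, hx1⟩ := hx
    set T := univ.filter fun w => x w ≠ 0 with hT
    have hTpos : ∀ w ∈ T, 0 < x w := by
      intro w hw
      rw [hT, Finset.mem_filter] at hw
      exact lt_of_le_of_ne (hx0 w) (Ne.symm hw.2)
    have hxT : ∀ w, w ∉ T → x w = 0 := by
      intro w hw
      by_contra h
      exact hw (by simp [hT, h])
    by_cases hstab : IsStable G T
    · -- support is stable
      have hsumT : ∑ w ∈ T, x w = 1 := by
        rw [← hx1]
        exact Finset.sum_subset (Finset.subset_univ T) fun w _ hw => hxT w hw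
      have hTne : T.Nonempty := by
        rcases Finset.eq_empty_or_nonempty T with h | h
        · rw [h] at hsumT; simp at hsumT
        · exact h
      have hcardT : T.card ≤ alpha G := card_le_alpha G T hstab
      have hq : qform ((Gᶜ).adjMatrix ℝ) x = 1 - ∑ w ∈ T, x w ^ 2 := by
        rw [qform_expand]
        have step1 : (∑ w, ∑ z, x w * (Gᶜ).adjMatrix ℝ w z * x z)
            = ∑ w ∈ T, ∑ z ∈ T, x w * (Gᶜ).adjMatrix ℝ w z * x z := by
          rw [← Finset.sum_subset (Finset.subset_univ T)
            (fun w _ hw => by simp [hxT w hw])]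
          refine Finset.sum_congr rfl fun w _ => ?_
          rw [← Finset.sum_subset (Finset.subset_univ T)
            (fun z _ hz => by simp [hxT z hz])]
        rw [step1]
        have step2 : ∀ w ∈ T, ∀ z ∈ T,
            x w * (Gᶜ).adjMatrix ℝ w z * x z
              = x w * x z - (if w = z then x w * x z else 0) := by
          intro w hw z hz
          by_cases h : w = z
          · subst h; simp
          · have hna : ¬ G.Adj w z := hstab w (by simpa [hT] using hw) z (by simpa [hT] using hz)
            simp [SimpleGraph.compl_adj, h, hna]
        rw [Finset.sum_congr rfl fun w hw => Finset.sum_congr rfl fun z hz => step2 w hw z hz]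
        have e1 : ∀ w ∈ T, ∑ z ∈ T, (x w * x z - (if w = z then x w * x z else 0))
            = (∑ z ∈ T, x w * x z) - x w ^ 2 := by
          intro w hw
          rw [Finset.sum_sub_distrib]
          congr 1
          rw [Finset.sum_ite_eq T w (fun z => x w * x z)]
          simp [hw, sq]
        rw [Finset.sum_congr rfl e1, Finset.sum_sub_distrib]
        have : ∑ w ∈ T, ∑ z ∈ T, x w * x z = 1 := by
          rw [← Finset.sum_mul_sum, hsumT]; ring
        rw [this]
      have hCS : (1:ℝ) ≤ T.card * ∑ w ∈ T, x w ^ 2 := by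
        have := sq_sum_le_card_mul_sum_sq (s := T) (f := x)
        rw [hsumT] at this
        simpa using this
      have hc0 : (0:ℝ) < T.card := by exact_mod_cast Finset.card_pos.mpr hTne
      have ha0 : (0:ℝ) < alpha G := by
        have : (T.card : ℝ) ≤ alpha G := by exact_mod_cast hcardT
        linarith
      have h1 : ((T.card : ℝ))⁻¹ ≤ ∑ w ∈ T, x w ^ 2 := by
        rw [inv_le_iff_one_le_mul₀ hc0] -- guess name
        linarith [hCS]
      have h2 : ((alpha G : ℝ))⁻¹ ≤ ((T.card : ℝ))⁻¹ := by
        apply inv_anti₀ hc0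
        exact_mod_cast hcardT
      rw [hq]
      linarith
    · -- there is an edge inside the support: shift mass
      rw [IsStable] at hstab
      push_neg at hstab
      obtain ⟨u, hu, v, hv, hAdj⟩ := hstab
      have hune : u ≠ v := hAdj.ne
      set B := (Gᶜ).adjMatrix ℝ with hB
      have hBsymm : ∀ w z, B w z = B z w := by
        intro w z
        have h := Gᶜ.adj_comm w z
        simp [hB, SimpleGraph.adjMatrix_apply, h]
      set d : Fin n → ℝ := fun w => (if w = v then (1:ℝ) else 0) - (if w = u then 1 else 0)
        with hd
      have hBuv : B u v = 0 := by simp [hB, SimpleGraph.compl_adj, hAdj]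
      have hBvu : B v u = 0 := by rw [← hBsymm]; exact hBuv
      have hqd : qform B d = 0 := by
        rw [qform_expand]
        refine Finset.sum_eq_zero fun w _ => Finset.sum_eq_zero fun z _ => ?_
        by_cases hw : w = u ∨ w = v
        · by_cases hz : z = u ∨ z = v
          · rcases hw with hw | hw <;> rcases hz with hz | hz
            · subst hw; subst hz; simp [hB]
            · subst hw; subst hz; rw [hBuv]; ring
            · subst hw; subst hz; rw [hBvu]; ring
            · subst hw; subst hz; simp [hB]
          · push_neg at hz
            have : d z = 0 := by simp [hd, hz.1, hz.2]
            rw [this]; ring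
        · push_neg at hw
          have : d w = 0 := by simp [hd, hw.1, hw.2]
          rw [this]; ring
      have hsd : ∑ w, d w = 0 := by
        simp [hd, Finset.sum_sub_distrib]
      set c := ∑ w, ∑ z, d w * B w z * x z with hc
      have hxu : 0 < x u := hTpos u hu
      have hxv : 0 < x v := hTpos v hv
      -- the two shifted points
      have key : ∀ s : ℝ, s = x u ∨ s = -(x v) → qform B (x + s • d) ≤ 1 - (alpha G : ℝ)⁻¹ := by
        intro s hs
        set y := x + s • d with hy
        have hyu : ∀ w, y w = x w + s * ((if w = v then (1:ℝ) else 0) - (if w = u then 1 else 0)) := by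
          intro w; simp [hy, hd]
        apply ih
        · constructor
          · intro w
            rw [hyu w]
            by_cases h1 : w = u
            · subst h1
              rcases hs with hs | hs <;> rw [hs] <;> simp [hune, Ne.symm hune] <;> linarith
            · by_cases h2 : w = v
              · subst h2
                rcases hs with hs | hs <;> rw [hs] <;> simp [hune, Ne.symm hune, h1] <;> linarith
              · simp [h1, h2]; exact hx0 w
          · have : ∑ w, y w = (∑ w, x w) + s * ∑ w, d w := by
              simp [hy, Finset.sum_add_distrib, Finset.mul_sum]
            rw [this, hsd, hx1]; ring
        · -- support bound
          obtain ⟨p, hpT, hyp⟩ : ∃ p, p ∈ T ∧ y p = 0 := by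
            rcases hs with hs | hs
            · refine ⟨u, hu, ?_⟩
              rw [hyu u, hs]
              simp [hune]
            · refine ⟨v, hv, ?_⟩
              rw [hyu v, hs]
              simp [Ne.symm hune]
          have hsub : (univ.filter fun w => y w ≠ 0) ⊆ T.erase p := by
            intro w hw
            rw [Finset.mem_filter] at hw
            rw [Finset.mem_erase]
            constructor
            · rintro rfl
              exact hw.2 hyp
            · by_contra hwT
              apply hw.2
              have hxw : x w = 0 := hxT w hwT
              have hwu : w ≠ u := fun h => hwT (h ▸ hu)
              have hwv : w ≠ v := fun h => hwT (h ▸ hv)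
              rw [hyu w, hxw]
              simp [hwu, hwv]
          calc (univ.filter fun w => y w ≠ 0).card ≤ (T.erase p).card :=
                Finset.card_le_card hsub
            _ = T.card - 1 := Finset.card_erase_of_mem hpT
            _ ≤ k := by omega
      -- combine
      have he1 := qform_add_smul B hBsymm x d (x u)
      have he2 := qform_add_smul B hBsymm x d (-(x v))
      rw [hqd, ← hc] at he1 he2
      rcases le_or_gt 0 c with hc0 | hc0
      · have h1 := key (x u) (Or.inl rfl)
        have h2 : 0 ≤ x u * c := mul_nonneg hxu.le hc0
        nlinarith [he1, h1]
      · have h1 := key (-(x v)) (Or.inr rfl)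
        have h2 : 0 ≤ x v * (-c) := mul_nonneg hxv.le (by linarith)
        nlinarith [he2, h1]

lemma fG_lower {n : ℕ} (G : SimpleGraph (Fin n)) (y : Fin n → ℝ)
    (hy : y ∈ stdSimplex ℝ (Fin n)) : (alpha G : ℝ)⁻¹ ≤ fG G y := by
  have h := ms_bound G n y hy (le_trans (Finset.card_le_univ _) (by simp))
  have hd := decomp G y
  rw [hy.2] at hd
  nlinarith [h, hd]

lemma qform_smul_add {n : ℕ} (M : Matrix (Fin n) (Fin n) ℝ) (a b : ℝ) (p q : Fin n → ℝ) :
    qform M (a • p + b • q) = a ^ 2 * qform M p + a * b * (p ⬝ᵥ M.mulVec q)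
      + a * b * (q ⬝ᵥ M.mulVec p) + b ^ 2 * qform M q := by
  simp only [qform, Matrix.mulVec_add, Matrix.mulVec_smul, dotProduct_add, add_dotProduct,
    dotProduct_smul, smul_dotProduct, smul_eq_mul]
  ring

lemma dot_indic {n : ℕ} (S T : Finset (Fin n)) :
    indic S ⬝ᵥ indic (n := n) T = ((S ∩ T).card : ℝ) := by
  simp only [dotProduct, indic, ite_mul, one_mul, zero_mul]
  rw [Finset.sum_ite_mem, Finset.univ_inter, Finset.sum_ite_mem]
  simp

lemma bilin_indic {n : ℕ} (G : SimpleGraph (Fin n)) (S T : Finset (Fin n)) :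
    indic S ⬝ᵥ (G.adjMatrix ℝ).mulVec (indic T)
      = ∑ w ∈ S, ∑ z ∈ T, (if G.Adj w z then (1:ℝ) else 0) := by
  simp only [dotProduct, Matrix.mulVec, indic, ite_mul, one_mul, zero_mul,
    SimpleGraph.adjMatrix_apply, dotProduct, mul_ite, mul_one, mul_zero]
  rw [Finset.sum_ite_mem, Finset.univ_inter]
  exact Finset.sum_congr rfl fun w _ => by rw [Finset.sum_ite_mem, Finset.univ_inter]

lemma sum_indic {n : ℕ} (S : Finset (Fin n)) : ∑ w, indic S w = (S.card : ℝ) := by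
  simp only [indic]
  rw [Finset.sum_ite_mem, Finset.univ_inter]
  simp

theorem stmt_8 (n : ℕ) (G : SimpleGraph (Fin n)) (i j : Fin n) (hadj : G.Adj i j)
    (I : Finset (Fin n)) (hiI : i ∉ I) (hjI : j ∉ I)
    (hSi : IsStable G (insert i I)) (hSj : IsStable G (insert j I))
    (hci : (insert i I).card = alpha G) (hcj : (insert j I).card = alpha G) :
    (globMin (fG G)).Infinite ∧
      ∀ t ∈ Set.Icc (0:ℝ) 1,
        (alpha G : ℝ)⁻¹ • (t • indic (insert i I) + (1 - t) • indic (insert j I)) ∈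
          globMin (fG G) := by
  have hij : i ≠ j := hadj.ne
  have hiSj : i ∉ insert j I := by simp [hij, hiI]
  have hjSi : j ∉ insert i I := by simp [Ne.symm hij, hjI]
  have hcard_i : (insert i I).card = I.card + 1 := Finset.card_insert_of_notMem hiI
  have halpha : alpha G = I.card + 1 := by rw [← hci, hcard_i]
  have ha0 : (0:ℝ) < (alpha G : ℝ) := by
    rw [halpha]; exact_mod_cast Nat.succ_pos _
  set M := (1 : Matrix (Fin n) (Fin n) ℝ) + G.adjMatrix ℝ with hM
  have hMsum : ∀ S T : Finset (Fin n), indic S ⬝ᵥ M.mulVec (indic T)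
      = ((S ∩ T).card : ℝ) + ∑ w ∈ S, ∑ z ∈ T, (if G.Adj w z then (1:ℝ) else 0) := by
    intro S T
    rw [hM, Matrix.add_mulVec, Matrix.one_mulVec, dotProduct_add, dot_indic, bilin_indic]
  have hstab_zero : ∀ S : Finset (Fin n), IsStable G S →
      ∑ w ∈ S, ∑ z ∈ S, (if G.Adj w z then (1:ℝ) else 0) = 0 :=
    fun S hS => Finset.sum_eq_zero fun w hw => Finset.sum_eq_zero fun z hz => by
      simp [hS w hw z hz]
  have hinter : (insert i I) ∩ (insert j I) = I := by
    ext w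
    simp only [Finset.mem_inter, Finset.mem_insert]
    constructor
    · rintro ⟨h1 | h1, h2 | h2⟩
      · exact absurd (h1.symm.trans h2) hij
      · exact absurd (h1 ▸ h2) hiI
      · exact absurd (h2 ▸ h1) hjI
      · exact h1
    · intro hw; exact ⟨Or.inr hw, Or.inr hw⟩
  have hq1 : indic (insert i I) ⬝ᵥ M.mulVec (indic (insert i I)) = (alpha G : ℝ) := by
    rw [hMsum, hstab_zero _ hSi, Finset.inter_self, hci, add_zero]
  have hq2 : indic (insert j I) ⬝ᵥ M.mulVec (indic (insert j I)) = (alpha G : ℝ) := by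
    rw [hMsum, hstab_zero _ hSj, Finset.inter_self, hcj, add_zero]
  have hcross1 : indic (insert i I) ⬝ᵥ M.mulVec (indic (insert j I)) = (alpha G : ℝ) := by
    rw [hMsum, hinter]
    have hX : ∑ w ∈ insert i I, ∑ z ∈ insert j I, (if G.Adj w z then (1:ℝ) else 0) = 1 := by
      rw [Finset.sum_insert hiI]
      have h2 : ∑ w ∈ I, ∑ z ∈ insert j I, (if G.Adj w z then (1:ℝ) else 0) = 0 :=
        Finset.sum_eq_zero fun w hw => Finset.sum_eq_zero fun z hz => by
          simp [hSj w (Finset.mem_insert_of_mem hw) z hz]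
      have h1 : ∑ z ∈ insert j I, (if G.Adj i z then (1:ℝ) else 0) = 1 := by
        rw [Finset.sum_insert hjI]
        have : ∑ z ∈ I, (if G.Adj i z then (1:ℝ) else 0) = 0 :=
          Finset.sum_eq_zero fun z hz => by
            simp [hSi i (Finset.mem_insert_self i I) z (Finset.mem_insert_of_mem hz)]
        rw [this, if_pos hadj, add_zero]
      rw [h1, h2, add_zero]
    rw [hX, halpha]
    push_cast; ring
  have hcross2 : indic (insert j I) ⬝ᵥ M.mulVec (indic (insert i I)) = (alpha G : ℝ) := by
    rw [hMsum, Finset.inter_comm, hinter]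
    have hX : ∑ w ∈ insert j I, ∑ z ∈ insert i I, (if G.Adj w z then (1:ℝ) else 0) = 1 := by
      rw [Finset.sum_insert hjI]
      have h2 : ∑ w ∈ I, ∑ z ∈ insert i I, (if G.Adj w z then (1:ℝ) else 0) = 0 :=
        Finset.sum_eq_zero fun w hw => Finset.sum_eq_zero fun z hz => by
          simp [hSi w (Finset.mem_insert_of_mem hw) z hz]
      have h1 : ∑ z ∈ insert i I, (if G.Adj j z then (1:ℝ) else 0) = 1 := by
        rw [Finset.sum_insert hiI]
        have : ∑ z ∈ I, (if G.Adj j z then (1:ℝ) else 0) = 0 :=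
          Finset.sum_eq_zero fun z hz => by
            simp [hSj j (Finset.mem_insert_self j I) z (Finset.mem_insert_of_mem hz)]
        rw [this, if_pos hadj.symm, add_zero]
      rw [h1, h2, add_zero]
    rw [hX, halpha]
    push_cast; ring
  have hval : ∀ t : ℝ,
      fG G ((alpha G : ℝ)⁻¹ • (t • indic (insert i I) + (1 - t) • indic (insert j I)))
        = (alpha G : ℝ)⁻¹ := by
    intro t
    have hrw : (alpha G : ℝ)⁻¹ • (t • indic (insert i I) + (1 - t) • indic (insert j I))
        = ((alpha G : ℝ)⁻¹ * t) • indic (insert i I)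
          + ((alpha G : ℝ)⁻¹ * (1 - t)) • indic (insert j I) := by
      rw [smul_add, smul_smul, smul_smul]
    rw [fG, hrw, ← hM, qform_smul_add]
    have e1 : qform M (indic (insert i I)) = (alpha G : ℝ) := hq1
    have e2 : qform M (indic (insert j I)) = (alpha G : ℝ) := hq2
    rw [e1, e2, hcross1, hcross2]
    field_simp
    ring
  have hmem : ∀ t ∈ Set.Icc (0:ℝ) 1,
      (alpha G : ℝ)⁻¹ • (t • indic (insert i I) + (1 - t) • indic (insert j I))
        ∈ stdSimplex ℝ (Fin n) := by
    intro t ht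
    obtain ⟨ht0, ht1⟩ := ht
    constructor
    · intro w
      have e1 : (0:ℝ) ≤ indic (insert i I) w := by simp only [indic]; split <;> norm_num
      have e2 : (0:ℝ) ≤ indic (insert j I) w := by simp only [indic]; split <;> norm_num
      have : (0:ℝ) ≤ t * indic (insert i I) w + (1 - t) * indic (insert j I) w := by
        have := mul_nonneg ht0 e1
        have := mul_nonneg (by linarith : (0:ℝ) ≤ 1 - t) e2
        linarith
      simpa using mul_nonneg (inv_nonneg.mpr ha0.le) this
    · have : ∑ w, ((alpha G : ℝ)⁻¹ • (t • indic (insert i I) + (1 - t) • indic (insert j I))) w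
          = (alpha G : ℝ)⁻¹ * (t * (alpha G : ℝ) + (1 - t) * (alpha G : ℝ)) := by
        simp only [Pi.smul_apply, Pi.add_apply, smul_eq_mul]
        rw [← Finset.mul_sum, Finset.sum_add_distrib, ← Finset.mul_sum, ← Finset.mul_sum,
          sum_indic, sum_indic, hci, hcj]
      rw [this]
      field_simp
      ring
  have hglob : ∀ t ∈ Set.Icc (0:ℝ) 1,
      (alpha G : ℝ)⁻¹ • (t • indic (insert i I) + (1 - t) • indic (insert j I))
        ∈ globMin (fG G) := by
    intro t ht
    refine ⟨hmem t ht, fun y hy => ?_⟩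
    rw [hval t]
    exact fG_lower G y hy
  refine ⟨?_, hglob⟩
  have hinj : Set.InjOn
      (fun t : ℝ => (alpha G : ℝ)⁻¹ • (t • indic (insert i I) + (1 - t) • indic (insert j I)))
      (Set.Icc 0 1) := by
    intro t ht t' ht' h
    have hi' := congrFun h i
    simp only [Pi.smul_apply, Pi.add_apply, smul_eq_mul] at hi'
    rw [show indic (insert i I) i = 1 by simp [indic],
      show indic (insert j I) i = 0 by simp [indic, hiSj]] at hi'
    have : (alpha G : ℝ)⁻¹ * t = (alpha G : ℝ)⁻¹ * t' := by linarith [hi']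
    exact mul_left_cancel₀ (inv_ne_zero ha0.ne') this
  refine Set.Infinite.mono ?_ ((Set.Icc_infinite (by norm_num)).image hinj)
  rintro _ ⟨t, ht, rfl⟩
  exact hglob t ht
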